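/- Let m > 0 and define, for r ≥ m/2, q(r) = m/(r + m/2) and F(r) = (2 − q(r))(1 − q(r))·q(r). Then F(r) = m·k^{-2}(2k^{-1} − 1)·(2/r) where k = 1 + m/(2r), and sup_{r ≥ m/2} F(r) = 2/(3√3), attained uniquely at r = (1 + √3/2)·m. -/
import Mathlib


theorem stmt_19 (m : ℝ) (hm : 0 < m)
    (q F : ℝ → ℝ)
    (hq : ∀ r, q r = m / (r + m / 2))
    (hF : ∀ r, F r = (2 - q r) * (1 - q r) * q r) :
    (∀ r, m / 2 ≤ r →
        F r = m * ((1 + m / (2 * r)) ^ (-2 : ℤ)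
          * (2 * (1 + m / (2 * r))⁻¹ - 1) * (2 / r))) ∧
    (∀ r, m / 2 ≤ r → F r ≤ 2 / (3 * Real.sqrt 3)) ∧
    F ((1 + Real.sqrt 3 / 2) * m) = 2 / (3 * Real.sqrt 3) ∧
    (∀ r, m / 2 ≤ r → F r = 2 / (3 * Real.sqrt 3) → r = (1 + Real.sqrt 3 / 2) * m) := by
  have hs : Real.sqrt 3 ^ 2 = 3 := Real.sq_sqrt (by norm_num)
  set s := Real.sqrt 3 with hsdef
  have hs0 : 0 < s := Real.sqrt_pos.mpr (by norm_num)
  have hs1 : 1 < s := by nlinarith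
  have hs2 : s < 2 := by nlinarith
  have hval : 2 / (3 * s) = 2 * s / 9 := by
    rw [div_eq_div_iff (by positivity) (by norm_num)]; nlinarith
  -- key identity for the inequality
  have key : ∀ x : ℝ, 2 * s / 9 - (2 - x) * (1 - x) * x
      = (1 + 2 * s / 3 - x) * (x - 1 + s / 3) ^ 2
        + ((1 - x) / 3 - 2 * s / 27) * (s ^ 2 - 3) := by
    intro x; ring
  refine ⟨?_, ?_, ?_, ?_⟩
  · intro r hr
    have hr0 : 0 < r := lt_of_lt_of_le (by linarith) hr
    have hx : (0:ℝ) < r + m / 2 := by linarith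
    have hz : ((1 + m / (2 * r)) : ℝ) ^ (-2 : ℤ) = ((1 + m / (2 * r)) ^ 2)⁻¹ := by
      rw [zpow_neg, zpow_two, sq]
    rw [hF, hq, hz]
    have h1 : (1 : ℝ) + m / (2 * r) = (r + m / 2) / r := by
      field_simp
    rw [h1]
    field_simp
    ring
  · intro r hr
    have hr0 : 0 < r := lt_of_lt_of_le (by linarith) hr
    have hx : (0:ℝ) < r + m / 2 := by linarith
    have hq1 : q r ≤ 1 := by
      rw [hq, div_le_one hx]; linarith
    rw [hF, hval]
    have hkey := key (q r)
    nlinarith [mul_nonneg (show (0:ℝ) ≤ 1 + 2 * s / 3 - q r by linarith)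
      (sq_nonneg (q r - 1 + s / 3))]
  · rw [hF, hq, hval]
    have hx : (1 + s / 2) * m + m / 2 = (3 + s) / 2 * m := by ring
    rw [hx]
    have h3s : (0:ℝ) < 3 + s := by linarith
    have hqv : m / ((3 + s) / 2 * m) = 2 / (3 + s) := by
      rw [div_eq_div_iff (by positivity) h3s.ne']; ring
    rw [hqv]
    field_simp
    ring_nf
    nlinarith [hs]
  · intro r hr heq
    have hr0 : 0 < r := lt_of_lt_of_le (by linarith) hr
    have hx : (0:ℝ) < r + m / 2 := by linarith
    have hq1 : q r ≤ 1 := by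
      rw [hq, div_le_one hx]; linarith
    rw [hF, hval] at heq
    have hkey := key (q r)
    have hfac : (1 + 2 * s / 3 - q r) * (q r - 1 + s / 3) ^ 2 = 0 := by
      nlinarith
    have hpos : (0:ℝ) < 1 + 2 * s / 3 - q r := by linarith
    have hsq : (q r - 1 + s / 3) ^ 2 = 0 := by
      rcases mul_eq_zero.mp hfac with h | h
      · linarith
      · exact h
    have hqval : q r = 1 - s / 3 := by
      have := pow_eq_zero_iff (n := 2) (by norm_num) |>.mp hsq
      linarith
    rw [hq] at hqval
    have hqe : m = (1 - s / 3) * (r + m / 2) := by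
      field_simp at hqval
      linarith [hqval]
    linear_combination (-3/2 - s/2) * hqe + (r/6 + m/12) * hs
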